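/- arXiv:0812.3593 — 7 statements merged into one kernel-verified Lean document; each statement's English description precedes it below -/
import Mathlib

section
/- Let f be a nonzero polynomial in n variables of total degree at most d with coefficients in a finite field F of cardinality q. Then the number of roots of f in F^n is at most d·q^(n-1). -/
open Finset

open scoped Classical in
theorem MvPolynomial.card_roots_mul_card_le_totalDegree_mul {R : Type*} [CommRing R] [IsDomain R]
    [Fintype R] {n : ℕ} {p : MvPolynomial (Fin n) R} (hp : p ≠ 0) :
    #{x : Fin n → R | MvPolynomial.eval x p = 0} * Fintype.card R
      ≤ p.totalDegree * Fintype.card R ^ n := by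
  have hq : (0 : ℚ≥0) < Fintype.card R := by exact_mod_cast Fintype.card_pos
  have h := MvPolynomial.schwartz_zippel_totalDegree hp univ
  rw [Fintype.piFinset_univ, card_univ, div_le_div_iff₀ (by positivity) hq] at h
  exact_mod_cast h

open scoped Classical in
/-- A nonzero multivariate polynomial of total degree at most `d` over a finite field `F`
with `q` elements has at most `d * q^(n-1)` roots in `F^n`. -/
theorem schwartz_zippel_card_roots
    (F : Type*) [Field F] [Fintype F] (n d : ℕ)
    (f : MvPolynomial (Fin n) F) (hf : f ≠ 0) (hd : f.totalDegree ≤ d) :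
    (Finset.univ.filter fun x : Fin n → F => MvPolynomial.eval x f = 0).card
      ≤ d * (Fintype.card F) ^ (n - 1) := by
  have hq : 0 < Fintype.card F := Fintype.card_pos
  refine Nat.le_of_mul_le_mul_right ?_ hq
  calc _ ≤ f.totalDegree * Fintype.card F ^ n :=
        MvPolynomial.card_roots_mul_card_le_totalDegree_mul hf
    _ ≤ d * (Fintype.card F ^ (n - 1) * Fintype.card F) := by
        gcongr
        -- `n - 1` truncates at `n = 0`; there `q ^ 0 ≤ q ^ 0 * q` still holds
        rw [← pow_succ]
        exact Nat.pow_le_pow_right hq (by omega)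
    _ = _ := (mul_assoc _ _ _).symm
end

section
/- Let f be a nonzero polynomial in n variables of total degree at most d over a finite field F with q elements. If (a_1,…,a_n) is chosen uniformly at random from F^n, then the probability that f(a_1,…,a_n) = 0 is at most d/q. -/
open Finset MvPolynomial

open scoped Classical in
/-- If `f` is a nonzero multivariate polynomial of total degree at most `d` over a
finite field `F` with `q` elements, the probability that a uniformly random point of
`F^n` is a root of `f` is at most `d / q`. -/
theorem schwartz_zippel_prob_root
    (F : Type*) [Field F] [Fintype F] (n d : ℕ)
    (f : MvPolynomial (Fin n) F) (hf : f ≠ 0) (hd : f.totalDegree ≤ d) :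
    ((Finset.univ.filter fun x : Fin n → F => MvPolynomial.eval x f = 0).card : ℚ)
        / (Fintype.card (Fin n → F) : ℚ)
      ≤ (d : ℚ) / (Fintype.card F : ℚ) := by
  have h := schwartz_zippel_totalDegree hf (univ : Finset F)
  rw [Fintype.piFinset_univ, card_univ] at h
  rw [Fintype.card_fun, Fintype.card_fin]
  calc _ ≤ (f.totalDegree : ℚ) / Fintype.card F := by exact_mod_cast h
    _ ≤ _ := by gcongr
end

section
/- Let f be a nonzero polynomial in n ≥ 1 variables of total degree at most d over a finite field F with q elements, with d < q. Then f has at least (q-d)·q^(n-1) non-roots, i.e., points of F^n where f does not vanish; in particular f has a non-root. -/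
/-!
By the Schwartz–Zippel lemma a nonzero polynomial of total degree `d` in `n + 1` variables
vanishes on at most `d · |S|ⁿ` points of `Sⁿ⁺¹`, so it is nonzero on at least
`(|S| - d) · |S|ⁿ` of them; for `S = F` and `d < q` this count is positive.
-/

open Finset

namespace MvPolynomial

variable {R : Type*} [CommRing R] [IsDomain R] [DecidableEq R]

theorem card_zeros_piFinset_le {n : ℕ} {p : MvPolynomial (Fin (n + 1)) R} (hp : p ≠ 0)
    (S : Finset R) :
    #{x ∈ Fintype.piFinset fun _ ↦ S | eval x p = 0} ≤ p.totalDegree * #S ^ n := by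
  rcases S.eq_empty_or_nonempty with rfl | hS
  · simp
  have hSpos : (0 : ℚ≥0) < #S := by exact_mod_cast hS.card_pos
  have h := schwartz_zippel_totalDegree hp S
  rw [div_le_div_iff₀ (by positivity) hSpos, pow_succ, ← mul_assoc] at h
  exact_mod_cast le_of_mul_le_mul_right h hSpos

theorem card_nonroots_piFinset_ge {n : ℕ} {p : MvPolynomial (Fin (n + 1)) R} (hp : p ≠ 0)
    (S : Finset R) :
    (#S - p.totalDegree) * #S ^ n ≤ #{x ∈ Fintype.piFinset fun _ ↦ S | eval x p ≠ 0} := by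
  have hsplit := card_filter_add_card_filter_not (s := Fintype.piFinset fun _ ↦ S)
    (fun x ↦ eval x p = 0)
  rw [Fintype.card_piFinset_const] at hsplit
  have hzeros := card_zeros_piFinset_le hp S
  simp only [ne_eq]
  rw [Nat.sub_mul, ← pow_succ']
  omega

end MvPolynomial

open scoped Classical in
/-- A nonzero multivariate polynomial in `n ≥ 1` variables of total degree at most `d < q`
over a finite field `F` with `q` elements has at least `(q-d)·q^(n-1)` non-roots;
in particular it has a non-root. -/
theorem nonroots_lower_bound
    (F : Type*) [Field F] [Fintype F] (n d : ℕ) (hn : 1 ≤ n)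
    (hd : d < Fintype.card F)
    (f : MvPolynomial (Fin n) F) (hf : f ≠ 0) (hdeg : f.totalDegree ≤ d) :
    (Fintype.card F - d) * (Fintype.card F) ^ (n - 1)
        ≤ (Finset.univ.filter fun x : Fin n → F => MvPolynomial.eval x f ≠ 0).card
      ∧ ∃ x : Fin n → F, MvPolynomial.eval x f ≠ 0 := by
  obtain ⟨m, rfl⟩ := Nat.exists_eq_add_of_le' hn
  have hbound : (Fintype.card F - d) * Fintype.card F ^ m
      ≤ #{x : Fin (m + 1) → F | MvPolynomial.eval x f ≠ 0} :=
    calc (Fintype.card F - d) * Fintype.card F ^ m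
        ≤ (Fintype.card F - f.totalDegree) * Fintype.card F ^ m := by gcongr
      _ ≤ #{x : Fin (m + 1) → F | MvPolynomial.eval x f ≠ 0} := by
        simpa using MvPolynomial.card_nonroots_piFinset_ge hf univ
  have hpos : 0 < (Fintype.card F - d) * Fintype.card F ^ m :=
    Nat.mul_pos (Nat.sub_pos_of_lt hd) (pow_pos Fintype.card_pos m)
  obtain ⟨x, hx⟩ := card_pos.mp (hpos.trans_le hbound)
  exact ⟨by simpa using hbound, x, (mem_filter.mp hx).2⟩
end

section
/- Let G be a k-uniform hypergraph and let G' be the (k+1)-uniform hypergraph obtained by adding one new vertex ⋆ to V(G) and replacing each hyperedge e of G by e ∪ {⋆}. Then the map T ↦ {A \ {⋆} : A ∈ E(T)} is a bijection from the set of spanning hypertrees of G' to the set of exact covers of G. -/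
variable {α : Type*} [DecidableEq α]

/-- Two vertices are adjacent in a hypergraph with hyperedge set `E`
if they are distinct and lie in a common hyperedge. -/
def HypAdj (E : Finset (Finset α)) (u v : α) : Prop :=
  u ≠ v ∧ ∃ e ∈ E, u ∈ e ∧ v ∈ e

/-- A hypergraph with vertex set `V` and hyperedge set `E` is connected if any two
vertices are joined by a path of adjacent vertices. -/
def HypConnected (V : Finset α) (E : Finset (Finset α)) : Prop :=
  ∀ u ∈ V, ∀ v ∈ V, Relation.ReflTransGen (HypAdj E) u v

/-- A hypergraph has a cycle if there is a cyclic alternating sequence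
`v₁, A₁, v₂, A₂, …, v_ℓ, A_ℓ, v_{ℓ+1} = v₁` with `ℓ ≥ 2`, the hyperedges `Aᵢ ∈ E`
pairwise distinct, `vᵢ ≠ vᵢ₊₁`, and `vᵢ, vᵢ₊₁ ∈ Aᵢ` for all `i`. -/
def HypHasCycle (E : Finset (Finset α)) : Prop :=
  ∃ (ℓ : ℕ) (v : Fin (ℓ + 1) → α) (A : Fin ℓ → Finset α),
    2 ≤ ℓ ∧ v (Fin.last ℓ) = v 0 ∧ Function.Injective A ∧
    ∀ i : Fin ℓ, A i ∈ E ∧ v i.castSucc ≠ v i.succ ∧ v i.castSucc ∈ A i ∧ v i.succ ∈ A i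

/-- `(V, E)` is a hypertree: the hyperedges lie inside `V`, and the hypergraph
is connected and has no cycle. -/
def IsHypertree (V : Finset α) (E : Finset (Finset α)) : Prop :=
  (∀ e ∈ E, e ⊆ V) ∧ HypConnected V E ∧ ¬ HypHasCycle E

/-- `E'` is (the hyperedge set of) a spanning hypertree of the hypergraph `(V, E)`. -/
def IsSpanningHypertree (V : Finset α) (E E' : Finset (Finset α)) : Prop :=
  E' ⊆ E ∧ IsHypertree V E'

/-- `E'` is an exact cover of the hypergraph `(V, E)`: a subset of the hyperedges such that
every vertex belongs to exactly one hyperedge of `E'`. -/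
def IsExactCover (V : Finset α) (E E' : Finset (Finset α)) : Prop :=
  E' ⊆ E ∧ ∀ v ∈ V, ∃! e, e ∈ E' ∧ v ∈ e

lemma two_edges_cycle {T : Finset (Finset α)} (hnocyc : ¬ HypHasCycle T)
    {A B : Finset α} (hA : A ∈ T) (hB : B ∈ T) (hAB : A ≠ B)
    {star x : α} (hsA : star ∈ A) (hsB : star ∈ B) (hx : x ≠ star)
    (hxA : x ∈ A) (hxB : x ∈ B) : False := by
  apply hnocyc
  refine ⟨2, ![star, x, star], ![A, B], le_refl 2, by simp [Fin.last], ?_, ?_⟩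
  · intro i j h
    fin_cases i <;> fin_cases j <;> simp_all
  · intro i
    fin_cases i <;>
      simp_all [Fin.castSucc, Fin.succ, Fin.castAdd, Fin.castLE, Ne.symm hx]

/-- Let `G = (V, E)` be a `k`-uniform hypergraph and `G'` the `(k+1)`-uniform hypergraph
obtained by adjoining a new vertex `⋆` to every hyperedge.  Then deleting `⋆` from each
hyperedge gives a bijection from the spanning hypertrees of `G'` to the exact covers
of `G`. -/
theorem spanning_hypertrees_bij_exact_covers
    (V : Finset α) (E : Finset (Finset α)) (k : ℕ)
    (huniform : ∀ e ∈ E, e.card = k) (hedges : ∀ e ∈ E, e ⊆ V)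
    (star : α) (hstar : star ∉ V) :
    Set.BijOn (fun T : Finset (Finset α) => T.image (fun A => A.erase star))
      {T | IsSpanningHypertree (insert star V) (E.image (insert star)) T}
      {E' | IsExactCover V E E'} := by
  -- structure of edges of a subgraph of G'
  have hform : ∀ T : Finset (Finset α), T ⊆ E.image (insert star) →
      ∀ A ∈ T, star ∈ A ∧ A.erase star ∈ E ∧ insert star (A.erase star) = A := by
    intro T hTE A hA
    obtain ⟨e, he, rfl⟩ := Finset.mem_image.mp (hTE hA)
    have hse : star ∉ e := fun h => hstar (hedges e he h)
    simp [Finset.erase_insert hse, he]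
  refine ⟨?_, ?_, ?_⟩
  · -- MapsTo
    rintro T ⟨hTE, hV, hconn, hnocyc⟩
    have hf := hform T hTE
    refine ⟨?_, ?_⟩
    · intro e he
      obtain ⟨A, hA, rfl⟩ := Finset.mem_image.mp he
      exact (hf A hA).2.1
    · intro v hv
      have hvs : v ≠ star := fun h => hstar (h ▸ hv)
      have hconn' := hconn v (Finset.mem_insert_of_mem hv) star (Finset.mem_insert_self _ _)
      obtain ⟨A, hA, hvA⟩ : ∃ A ∈ T, v ∈ A := by
        rcases Relation.ReflTransGen.cases_head hconn' with h | ⟨w, ⟨hne, e, heT, hve, hwe⟩, _⟩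
        · exact absurd h hvs
        · exact ⟨e, heT, hve⟩
      refine ⟨A.erase star, ⟨Finset.mem_image_of_mem _ hA, Finset.mem_erase.mpr ⟨hvs, hvA⟩⟩, ?_⟩
      rintro f ⟨hfm, hvf⟩
      obtain ⟨B, hB, rfl⟩ := Finset.mem_image.mp hfm
      have hvB : v ∈ B := Finset.mem_of_mem_erase hvf
      by_contra hne
      have hBA : B ≠ A := fun h => hne (by rw [h])
      exact two_edges_cycle hnocyc hB hA hBA (hf B hB).1 (hf A hA).1 hvs hvB hvA
  · -- InjOn
    have key : ∀ T : Finset (Finset α), T ⊆ E.image (insert star) →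
        (T.image (fun A => A.erase star)).image (insert star) = T := by
      intro T hTE
      rw [Finset.image_image]
      calc T.image ((insert star) ∘ (fun A => A.erase star))
          = T.image id := Finset.image_congr (fun A hA => (hform T hTE A hA).2.2)
        _ = T := Finset.image_id
    rintro T1 ⟨hT1, _⟩ T2 ⟨hT2, _⟩ h
    have := congrArg (fun S => Finset.image (insert star) S) h
    simpa [key T1 hT1, key T2 hT2] using this
  · -- SurjOn
    rintro E' ⟨hE'E, hcov⟩
    refine ⟨E'.image (insert star), ?_, ?_⟩
    · -- it is a spanning hypertree
      set T := E'.image (insert star) with hT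
      have hTE : T ⊆ E.image (insert star) := Finset.image_subset_image hE'E
      have hsnot : ∀ e ∈ E', star ∉ e := fun e he h => hstar (hedges e (hE'E he) h)
      -- distinct edges of T meet only in star
      have hdisj : ∀ A ∈ T, ∀ B ∈ T, A ≠ B → ∀ x, x ∈ A → x ∈ B → x = star := by
        intro A hA B hB hAB x hxA hxB
        obtain ⟨a, ha, rfl⟩ := Finset.mem_image.mp hA
        obtain ⟨b, hb, rfl⟩ := Finset.mem_image.mp hB
        by_contra hxs
        have hxa : x ∈ a := by
          rcases Finset.mem_insert.mp hxA with h | h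
          · exact absurd h hxs
          · exact h
        have hxb : x ∈ b := by
          rcases Finset.mem_insert.mp hxB with h | h
          · exact absurd h hxs
          · exact h
        obtain ⟨e, _, huniq⟩ := hcov x (hedges a (hE'E ha) hxa)
        exact hAB (by rw [huniq a ⟨ha, hxa⟩, huniq b ⟨hb, hxb⟩])
      refine ⟨hTE, ?_, ?_, ?_⟩
      · intro e he
        obtain ⟨a, ha, rfl⟩ := Finset.mem_image.mp he
        exact Finset.insert_subset_insert star (fun y hy => hedges a (hE'E ha) hy)
      · -- connectivity
        have toStar : ∀ u ∈ insert star V, Relation.ReflTransGen (HypAdj T) u star := by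
          intro u hu
          rcases Finset.mem_insert.mp hu with h | h
          · exact h ▸ Relation.ReflTransGen.refl
          · obtain ⟨e, ⟨he, hue⟩, _⟩ := hcov u h
            have hus : u ≠ star := fun hh => hstar (hh ▸ h)
            exact Relation.ReflTransGen.single
              ⟨hus, insert star e, Finset.mem_image_of_mem _ he,
                Finset.mem_insert_of_mem hue, Finset.mem_insert_self _ _⟩
        have fromStar : ∀ u ∈ insert star V, Relation.ReflTransGen (HypAdj T) star u := by
          intro u hu
          rcases Finset.mem_insert.mp hu with h | h
          · exact h ▸ Relation.ReflTransGen.refl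
          · obtain ⟨e, ⟨he, hue⟩, _⟩ := hcov u h
            have hus : u ≠ star := fun hh => hstar (hh ▸ h)
            exact Relation.ReflTransGen.single
              ⟨hus.symm, insert star e, Finset.mem_image_of_mem _ he,
                Finset.mem_insert_self _ _, Finset.mem_insert_of_mem hue⟩
        intro u hu v hv
        exact (toStar u hu).trans (fromStar v hv)
      · -- no cycle
        rintro ⟨ℓ, v, A, hℓ, hlast, hinjA, hcond⟩
        set j0 : Fin ℓ := ⟨0, by omega⟩ with hj0
        set j1 : Fin ℓ := ⟨1, by omega⟩ with hj1
        set jl : Fin ℓ := ⟨ℓ - 1, by omega⟩ with hjl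
        have h01 : j0.succ = j1.castSucc := by
          apply Fin.ext; simp [hj0, hj1]
        have hlsucc : jl.succ = Fin.last ℓ := by
          apply Fin.ext; simp [hjl]; omega
        have h0cast : j0.castSucc = 0 := by
          apply Fin.ext; simp [hj0]
        obtain ⟨hA0, hne0, hv0A0, hv1A0⟩ := hcond j0
        obtain ⟨hA1, _, hv1A1, _⟩ := hcond j1
        obtain ⟨hAl, _, _, hvlAl⟩ := hcond jl
        -- v 1 = star
        have hAne01 : A j0 ≠ A j1 := fun h => by
          have := hinjA h
          simp [hj0, hj1, Fin.ext_iff] at this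
        have hv1star : v j0.succ = star := by
          apply hdisj _ hA0 _ hA1 hAne01 _ hv1A0 (h01 ▸ hv1A1)
        -- v 0 = star
        have hAnel0 : A jl ≠ A j0 := fun h => by
          have := hinjA h
          simp [hjl, hj0, Fin.ext_iff] at this
          omega
        have hv0Al : v j0.castSucc ∈ A jl := by
          rw [h0cast]
          rw [hlsucc, hlast] at hvlAl
          exact hvlAl
        have hv0star : v j0.castSucc = star := hdisj _ hAl _ hA0 hAnel0 _ hv0Al hv0A0
        exact hne0 (hv0star.trans hv1star.symm)
    · -- the image condition
      show (E'.image (insert star)).image (fun A => A.erase star) = E'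
      rw [Finset.image_image]
      calc E'.image ((fun A => A.erase star) ∘ (insert star))
          = E'.image id := Finset.image_congr (fun e he => by
            simp [Finset.erase_insert (fun h => hstar (hedges e (hE'E he) h))])
        _ = E' := Finset.image_id
end

section
/- A graph G has a perfect matching if and only if the 3-uniform hypergraph G', obtained by adding a new vertex ⋆ and replacing each edge {i,j} of G by {i,j,⋆}, has a spanning hypertree. -/
variable {α : Type*} [DecidableEq α]

open scoped Classical in
/-- The hyperedge set of the 3-uniform hypergraph `G'` obtained from a simple graph `G`
by adding a new vertex `⋆` (here `none : Option V`) and replacing each edge `{i, j}`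
by `{i, j, ⋆}`. -/
noncomputable def tripledEdges {V : Type*} [Fintype V] [DecidableEq V]
    (G : SimpleGraph V) : Finset (Finset (Option V)) :=
  Finset.univ.filter (fun s : Finset (Option V) =>
    ∃ i j : V, G.Adj i j ∧ s = {none, some i, some j})

/-!
Every hyperedge of `G'` contains `⋆`. In a hypergraph all of whose hyperedges share a vertex `c`,
connectedness says that every other vertex lies in some hyperedge (it is then adjacent to `c`),
and acyclicity says that no vertex other than `c` lies in two hyperedges: two hyperedges sharing
`c` and another vertex form a cycle of length 2, while in any cycle `v₀` and `v₁` both lie in `A₀`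
and each also lies in another hyperedge (`A_{ℓ-1}`, resp. `A₁`), so they cannot both be `c`.
Hence the spanning hypertrees of `G'` are the sets of hyperedges `{i, j, ⋆}` covering every vertex
of `G` exactly once, i.e. the perfect matchings of `G`.
-/

section Hypergraph

omit [DecidableEq α]

variable {E : Finset (Finset α)}

theorem HypHasCycle.of_two_common_mem {e₁ e₂ : Finset α} {u v : α}
    (he₁ : e₁ ∈ E) (he₂ : e₂ ∈ E) (hne : e₁ ≠ e₂) (huv : u ≠ v)
    (hu₁ : u ∈ e₁) (hv₁ : v ∈ e₁) (hu₂ : u ∈ e₂) (hv₂ : v ∈ e₂) : HypHasCycle E := by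
  refine ⟨2, ![u, v, u], ![e₁, e₂], le_rfl, rfl, ?_, ?_⟩
  · intro i j hij
    fin_cases i <;> fin_cases j <;> simp_all [eq_comm]
  · intro i
    fin_cases i
    · exact ⟨he₁, huv, hu₁, hv₁⟩
    · exact ⟨he₂, huv.symm, hv₂, hu₂⟩

theorem not_hypHasCycle_of_inter_subset (c : α)
    (h : ∀ e₁ ∈ E, ∀ e₂ ∈ E, e₁ ≠ e₂ → ∀ v ∈ e₁, v ∈ e₂ → v = c) : ¬ HypHasCycle E := by
  rintro ⟨ℓ, v, A, hℓ, hlast, hA, hmem⟩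
  obtain ⟨k, rfl⟩ : ∃ k, ℓ = k + 2 := ⟨ℓ - 2, by omega⟩
  have h₀ := hmem 0
  have h₁ := hmem 1
  have hl := hmem (Fin.last (k + 1))
  simp only [Fin.castSucc_zero, Fin.succ_zero_eq_one, Fin.castSucc_one, Fin.succ_last,
    hlast] at h₀ h₁ hl
  have hv₀ : v 0 = c := h _ h₀.1 _ hl.1 (hA.ne (by simp)) _ h₀.2.2.1 hl.2.2.2
  have hv₁ : v 1 = c := h _ h₀.1 _ h₁.1 (hA.ne (by simp)) _ h₀.2.2.2 h₁.2.2.1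
  exact h₀.2.1 (hv₀.trans hv₁.symm)

variable {c : α}

theorem not_hypHasCycle_iff_of_forall_mem (hE : ∀ e ∈ E, c ∈ e) :
    ¬ HypHasCycle E ↔ ∀ v, v ≠ c → ∀ e₁ ∈ E, ∀ e₂ ∈ E, v ∈ e₁ → v ∈ e₂ → e₁ = e₂ := by
  refine ⟨fun h v hv e₁ he₁ e₂ he₂ hv₁ hv₂ => ?_, fun h => ?_⟩
  · by_contra hne
    exact h (.of_two_common_mem he₁ he₂ hne hv hv₁ (hE _ he₁) hv₂ (hE _ he₂))
  · refine not_hypHasCycle_of_inter_subset c fun e₁ he₁ e₂ he₂ hne v hv₁ hv₂ => ?_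
    by_contra hv
    exact hne (h v hv e₁ he₁ e₂ he₂ hv₁ hv₂)

theorem hypConnected_iff_of_forall_mem {V : Finset α} (hc : c ∈ V) (hE : ∀ e ∈ E, c ∈ e) :
    HypConnected V E ↔ ∀ v ∈ V, v ≠ c → ∃ e ∈ E, v ∈ e := by
  refine ⟨fun h v hv hvc => ?_, fun h u hu v hv => ?_⟩
  · obtain rfl | ⟨w, ⟨-, e, he, hve, -⟩, -⟩ := (h v hv c hc).cases_head
    · exact absurd rfl hvc
    · exact ⟨e, he, hve⟩
  · have hto : Relation.ReflTransGen (HypAdj E) u c := by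
      by_cases huc : u = c
      · exact huc ▸ .refl
      · obtain ⟨e, he, hue⟩ := h u hu huc
        exact .single ⟨huc, e, he, hue, hE e he⟩
    have hfrom : Relation.ReflTransGen (HypAdj E) c v := by
      by_cases hvc : v = c
      · exact hvc ▸ .refl
      · obtain ⟨e, he, hve⟩ := h v hv hvc
        exact .single ⟨Ne.symm hvc, e, he, hE e he, hve⟩
    exact hto.trans hfrom

theorem isHypertree_iff_existsUnique_of_forall_mem {V : Finset α} (hc : c ∈ V)
    (hEV : ∀ e ∈ E, e ⊆ V) (hE : ∀ e ∈ E, c ∈ e) :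
    IsHypertree V E ↔ ∀ v ∈ V, v ≠ c → ∃! e, e ∈ E ∧ v ∈ e := by
  rw [IsHypertree, hypConnected_iff_of_forall_mem hc hE, not_hypHasCycle_iff_of_forall_mem hE]
  constructor
  · rintro ⟨-, hconn, huniq⟩ v hv hvc
    obtain ⟨e, he, hve⟩ := hconn v hv hvc
    exact ⟨e, ⟨he, hve⟩, fun e' ⟨he', hve'⟩ => huniq v hvc e' he' e he hve' hve⟩
  · intro h
    refine ⟨hEV, fun v hv hvc => (h v hv hvc).exists, ?_⟩
    intro v hvc e₁ he₁ e₂ he₂ hv₁ hv₂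
    exact (h v (hEV e₁ he₁ hv₁) hvc).unique ⟨he₁, hv₁⟩ ⟨he₂, hv₂⟩

end Hypergraph

theorem SimpleGraph.exists_isPerfectMatching_iff {V : Type*} {G : SimpleGraph V} :
    (∃ M : G.Subgraph, M.IsPerfectMatching) ↔ ∃ H ≤ G, ∀ v, ∃! w, H.Adj v w := by
  simp_rw [SimpleGraph.Subgraph.isPerfectMatching_iff]
  exact ⟨fun ⟨M, hM⟩ => ⟨M.spanningCoe, M.spanningCoe_le, hM⟩,
    fun ⟨H, hHG, hH⟩ => ⟨SimpleGraph.toSubgraph H hHG, hH⟩⟩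

section TripledEdges

variable {V : Type*} [Fintype V] [DecidableEq V] {G H : SimpleGraph V} {e : Finset (Option V)}

theorem mem_tripledEdges :
    e ∈ tripledEdges G ↔ ∃ i j, G.Adj i j ∧ e = {none, some i, some j} := by
  simp [tripledEdges]

theorem none_mem_of_mem_tripledEdges (he : e ∈ tripledEdges G) : none ∈ e := by
  obtain ⟨i, j, -, rfl⟩ := mem_tripledEdges.1 he
  simp

theorem tripledEdges_mono (h : G ≤ H) : tripledEdges G ⊆ tripledEdges H := fun e he => by
  obtain ⟨i, j, hij, rfl⟩ := mem_tripledEdges.1 he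
  exact mem_tripledEdges.2 ⟨i, j, h hij, rfl⟩

theorem mem_tripledEdges_and_some_mem_iff {v : V} :
    e ∈ tripledEdges G ∧ some v ∈ e ↔ ∃ w, G.Adj v w ∧ e = {none, some v, some w} := by
  constructor
  · rintro ⟨he, hv⟩
    obtain ⟨i, j, hij, rfl⟩ := mem_tripledEdges.1 he
    simp only [Finset.mem_insert, Finset.mem_singleton, Option.some.injEq, reduceCtorEq,
      false_or] at hv
    obtain rfl | rfl := hv
    · exact ⟨j, hij, rfl⟩
    · exact ⟨i, hij.symm, by rw [Finset.pair_comm]⟩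
  · rintro ⟨w, hvw, rfl⟩
    exact ⟨mem_tripledEdges.2 ⟨v, w, hvw, rfl⟩, by simp⟩

theorem existsUnique_mem_tripledEdges_iff (v : V) :
    (∃! e, e ∈ tripledEdges G ∧ some v ∈ e) ↔ ∃! w, G.Adj v w := by
  have hinj : Function.Injective fun w : V => ({none, some v, some w} : Finset (Option V)) := by
    intro w w' (h : ({none, some v, some w} : Finset (Option V)) = {none, some v, some w'})
    have hw : some w ∈ ({none, some v, some w'} : Finset (Option V)) := h ▸ by simp
    have hw' : some w' ∈ ({none, some v, some w} : Finset (Option V)) := h ▸ by simp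
    simp only [Finset.mem_insert, Finset.mem_singleton, Option.some.injEq, reduceCtorEq,
      false_or] at hw hw'
    grind
  simp_rw [mem_tripledEdges_and_some_mem_iff]
  constructor
  · rintro ⟨e, ⟨w, hvw, rfl⟩, huniq⟩
    exact ⟨w, hvw, fun w' hvw' => hinj (huniq _ ⟨w', hvw', rfl⟩)⟩
  · rintro ⟨w, hvw, huniq⟩
    exact ⟨_, ⟨w, hvw, rfl⟩, fun e ⟨w', hvw', he⟩ => by rw [he, huniq w' hvw']⟩

theorem exists_tripledEdges_eq_of_subset {E' : Finset (Finset (Option V))}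
    (h : E' ⊆ tripledEdges G) : ∃ H ≤ G, tripledEdges H = E' := by
  refine ⟨{ Adj i j := G.Adj i j ∧ {none, some i, some j} ∈ E'
            symm := ⟨fun i j hij => ⟨hij.1.symm, by rw [Finset.pair_comm]; exact hij.2⟩⟩ },
    fun _ _ hij => hij.1, ?_⟩
  ext e
  refine ⟨fun he => ?_, fun he => ?_⟩
  · obtain ⟨i, j, hij, rfl⟩ := mem_tripledEdges.1 he
    exact hij.2
  · obtain ⟨i, j, hij, rfl⟩ := mem_tripledEdges.1 (h he)
    exact mem_tripledEdges.2 ⟨i, j, ⟨hij, he⟩, rfl⟩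

theorem isSpanningHypertree_tripledEdges_iff {E' : Finset (Finset (Option V))} :
    IsSpanningHypertree Finset.univ (tripledEdges G) E' ↔
      E' ⊆ tripledEdges G ∧ ∀ v : V, ∃! e, e ∈ E' ∧ some v ∈ e := by
  refine and_congr_right fun h => ?_
  rw [isHypertree_iff_existsUnique_of_forall_mem (Finset.mem_univ none)
    (fun _ _ => Finset.subset_univ _) (fun e he => none_mem_of_mem_tripledEdges (h he))]
  simp [Option.forall]

end TripledEdges

/-- A graph `G` has a perfect matching iff the 3-uniform hypergraph `G'`, obtained by
adding a new vertex `⋆` and replacing each edge `{i, j}` by `{i, j, ⋆}`, has a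
spanning hypertree. -/
theorem perfect_matching_iff_spanning_hypertree
    {V : Type*} [Fintype V] [DecidableEq V] (G : SimpleGraph V) :
    (∃ M : G.Subgraph, M.IsPerfectMatching) ↔
      (∃ E' : Finset (Finset (Option V)),
        IsSpanningHypertree Finset.univ (tripledEdges G) E') := by
  simp only [SimpleGraph.exists_isPerfectMatching_iff, isSpanningHypertree_tripledEdges_iff]
  constructor
  · rintro ⟨H, hHG, hH⟩
    exact ⟨tripledEdges H, tripledEdges_mono hHG,
      fun v => (existsUnique_mem_tripledEdges_iff v).2 (hH v)⟩
  · rintro ⟨E', hE'G, hE'⟩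
    obtain ⟨H, hHG, rfl⟩ := exists_tripledEdges_eq_of_subset hE'G
    exact ⟨H, hHG, fun v => (existsUnique_mem_tripledEdges_iff v).1 (hE' v)⟩
end

section
/- (Matrix-Tree theorem, multivariate form) Let L be the N × N weighted Laplacian matrix with off-diagonal entries L_{ij} = -w_{ij} and diagonal entries L_{ii} = Σ_{k≠i} w_{ik}, where w_{ij} = w_{ji} are commuting indeterminates. Then for any i_0, the determinant of the principal minor L(i_0) obtained by deleting row and column i_0 equals the sum over all spanning trees T of the complete graph on N vertices of the product Π_{{i,j} ∈ E(T)} w_{ij}. -/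
/-!
Row `a` of the reduced Laplacian is `∑ₖ w a k • (e_a - e_k)`, where `e_r = 0` for the deleted
vertex `r`. Expanding the determinant multilinearly gives `∑_g (∏ₐ w a (g a)) · det N_g` over
all maps `g` assigning a parent to every vertex `a ≠ r`, where `N_g` has rows `e_a - e_{g a}`.
If every orbit of `g` reaches `r`, then `N_g` is unitriangular once vertices are ordered by their
distance to `r` along `g`, so `det N_g = 1`. Otherwise `g` has periodic points other than `r`; it
permutes them, so the corresponding rows of `N_g` sum to zero and `det N_g = 0`. Finally
`g ↦ {{a, g a}}` is a bijection from the maps whose orbits all reach `r` onto the spanning trees: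
its inverse sends a tree to the map taking each vertex to a neighbour closer to `r`.
-/

open Finset Function

namespace Matrix

variable {n κ R : Type*} [Fintype n] [DecidableEq n] [Fintype κ] [CommRing R]

theorem det_of_sum_mul_rows (c : n → κ → R) (B : n → κ → n → R) :
    det (of fun i j => ∑ k, c i k * B i k j) =
      ∑ g : n → κ, (∏ i, c i (g i)) * det (of fun i j => B i (g i) j) := by
  have hrows : (of fun i j => ∑ k, c i k * B i k j) = fun i => ∑ k, c i k • B i k := by
    ext i j
    simp [Finset.sum_apply]
  rw [det, hrows, ← AlternatingMap.coe_multilinearMap, MultilinearMap.map_sum]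
  refine sum_congr rfl fun g _ => ?_
  rw [← det_mul_column]
  rfl

end Matrix

namespace Function

variable {α : Type*} {f : α → α} {r : α}

theorem iterate_eq_of_fixedPt_of_le (hr : f r = r) {v : α} {k n : ℕ} (hk : f^[k] v = r)
    (hkn : k ≤ n) : f^[n] v = r := by
  obtain ⟨j, rfl⟩ := Nat.exists_eq_add_of_le hkn
  rw [add_comm, iterate_add_apply, hk, iterate_fixed hr]

theorem IsPeriodicPt.eq_of_forall_exists_iterate_eq {v : α} {n : ℕ}
    (hv : IsPeriodicPt f n v) (hn : 0 < n) (hr : f r = r) (hf : ∀ v, ∃ k, f^[k] v = r) :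
    v = r := by
  obtain ⟨k, hk⟩ := hf v
  rw [← (hv.mul_const k).eq]
  exact iterate_eq_of_fixedPt_of_le hr hk (Nat.le_mul_of_pos_left k hn)

theorem find_iterate_apply_lt [DecidableEq α] (hf : ∀ v, ∃ k, f^[k] v = r) {v : α}
    (hv : v ≠ r) : Nat.find (hf (f v)) < Nat.find (hf v) := by
  obtain ⟨k, hk⟩ := Nat.exists_eq_succ_of_ne_zero fun h => hv ((Nat.find_eq_zero (hf v)).1 h)
  have hfk : f^[k] (f v) = r := by
    rw [← iterate_succ_apply, ← hk]
    exact Nat.find_spec (hf v)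
  exact hk ▸ Nat.lt_succ_of_le (Nat.find_le hfk)

theorem exists_iterate_eq_of_map_lt (μ : α → ℕ) (hμ : ∀ v, v ≠ r → μ (f v) < μ v)
    (v : α) : ∃ k, f^[k] v = r := by
  induction hv : μ v using Nat.strong_induction_on generalizing v with
  | _ n ih =>
    by_cases hvr : v = r
    · exact ⟨0, hvr⟩
    obtain ⟨k, hk⟩ := ih _ (hv ▸ hμ v hvr) (f v) rfl
    exact ⟨k + 1, hk⟩

theorem exists_mem_periodicPts_ne_of_not_forall [Finite α] (hf : ¬∀ v, ∃ k, f^[k] v = r) :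
    ∃ u ∈ periodicPts f, u ≠ r := by
  push Not at hf
  obtain ⟨v, hv⟩ := hf
  obtain ⟨i, j, hij, heq⟩ := Finite.exists_ne_map_eq_of_infinite fun k => f^[k] v
  wlog hlt : i < j generalizing i j
  · exact this j i hij.symm heq.symm (by omega)
  refine ⟨f^[i] v, ⟨j - i, by omega, ?_⟩, hv i⟩
  change f^[j - i] (f^[i] v) = f^[i] v
  rw [← iterate_add_apply, Nat.sub_add_cancel hlt.le, heq]

theorem sum_filter_periodicPts_comp [Fintype α] [DecidablePred (· ∈ periodicPts f)]
    {M : Type*} [AddCommMonoid M] (φ : α → M) :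
    ∑ x ∈ univ.filter (· ∈ periodicPts f), φ (f x) =
      ∑ x ∈ univ.filter (· ∈ periodicPts f), φ x := by
  have hcoe : ((univ.filter (· ∈ periodicPts f) : Finset α) : Set α) = periodicPts f := by
    ext
    simp
  have hbij := bijOn_periodicPts f
  rw [← hcoe] at hbij
  exact sum_nbij f (fun x hx => hbij.mapsTo hx) hbij.injOn hbij.surjOn fun _ _ => rfl

end Function

theorem SimpleGraph.Connected.exists_adj_dist_lt {V : Type*} {G : SimpleGraph V}
    (hG : G.Connected) {u v : V} (huv : u ≠ v) :
    ∃ x, G.Adj u x ∧ G.dist x v < G.dist u v := by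
  obtain ⟨p, hp⟩ := hG.exists_walk_length_eq_dist u v
  cases p with
  | nil => exact absurd rfl huv
  | cons h q =>
    refine ⟨_, h, (SimpleGraph.dist_le q).trans_lt ?_⟩
    rw [← hp, SimpleGraph.Walk.length_cons]
    omega

namespace MatrixTree

open SimpleGraph

variable {V : Type*} [DecidableEq V] (r : V)

def parentMap (g : {v // v ≠ r} → V) : V → V :=
  fun v => if h : v = r then r else g ⟨v, h⟩

def ReachesRoot (g : {v // v ≠ r} → V) : Prop :=
  ∀ v, ∃ k, (parentMap r g)^[k] v = r

def parentEdge (g : {v // v ≠ r} → V) (a : {v // v ≠ r}) : Sym2 V :=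
  s(a, g a)

def parentGraph (g : {v // v ≠ r} → V) : SimpleGraph V :=
  fromEdgeSet (Set.range (parentEdge r g))

def parentMatrix (R : Type*) [CommRing R] (g : {v // v ≠ r} → V) :
    Matrix {v // v ≠ r} {v // v ≠ r} R :=
  Matrix.of fun a b => (if (a : V) = b then 1 else 0) - (if g a = b then 1 else 0)

variable {r}

@[simp] theorem parentMap_root (g : {v // v ≠ r} → V) : parentMap r g r = r := dif_pos rfl

@[simp] theorem parentMap_coe (g : {v // v ≠ r} → V) (a : {v // v ≠ r}) :
    parentMap r g a = g a := dif_neg a.2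

theorem parentGraph_reachable_parentMap (g : {v // v ≠ r} → V) (v : V) :
    (parentGraph r g).Reachable v (parentMap r g v) := by
  by_cases hv : v = r
  · subst hv
    simp
  lift v to {v // v ≠ r} using hv
  rw [parentMap_coe]
  by_cases hfix : (v : V) = g v
  · rw [← hfix]
  · exact Adj.reachable ⟨⟨v, rfl⟩, hfix⟩

theorem parentGraph_reachable_iterate (g : {v // v ≠ r} → V) (v : V) (k : ℕ) :
    (parentGraph r g).Reachable v ((parentMap r g)^[k] v) := by
  induction k with
  | zero => rfl
  | succ k ih =>
    rw [iterate_succ_apply']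
    exact ih.trans (parentGraph_reachable_parentMap g _)

-- `parentMap r g` permutes its periodic points, and `r` contributes nothing since it is fixed.
theorem sum_smul_parentMatrix_periodicPts [Fintype V] {R : Type*} [CommRing R]
    (g : {v // v ≠ r} → V) [DecidablePred (· ∈ periodicPts (parentMap r g))] :
    ∑ a : {v // v ≠ r}, (if (a : V) ∈ periodicPts (parentMap r g) then (1 : R) else 0) •
      parentMatrix r R g a = 0 := by
  set f := parentMap r g
  set P : Finset V := univ.filter (· ∈ periodicPts f)
  ext b
  let F (v : V) : R :=
    (if v ∈ periodicPts f then 1 else 0) * ((if v = b then 1 else 0) - (if f v = b then 1 else 0))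
  have hFr : F r = 0 := by simp [F, f]
  rw [Finset.sum_apply]
  calc _ = ∑ a : {v // v ≠ r}, F a := by simp [F, parentMatrix, f]
    _ = ∑ v, F v := by rw [Fintype.sum_eq_add_sum_subtype_ne F r, hFr, zero_add]
    _ = ∑ v ∈ P, (if v = b then 1 else 0) - ∑ v ∈ P, (if f v = b then 1 else 0) := by
      rw [← sum_sub_distrib, sum_filter]
      exact sum_congr rfl fun v _ => by simp only [F, ite_mul, one_mul, zero_mul]
    _ = 0 := by
      rw [sum_filter_periodicPts_comp fun v => if v = (b : V) then (1 : R) else 0, sub_self]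

theorem det_parentMatrix_of_not_reachesRoot {R : Type*} [CommRing R] [Fintype V]
    {g : {v // v ≠ r} → V} (hg : ¬ReachesRoot r g) : (parentMatrix r R g).det = 0 := by
  classical
  obtain ⟨u, hu, hur⟩ := exists_mem_periodicPts_ne_of_not_forall hg
  have hdet := Matrix.det_updateRow_sum (parentMatrix r R g) ⟨u, hur⟩
    fun a => if (a : V) ∈ periodicPts (parentMap r g) then 1 else 0
  rw [sum_smul_parentMatrix_periodicPts,
    Matrix.det_eq_zero_of_row_eq_zero ⟨u, hur⟩ fun _ => by simp] at hdet
  simpa [hu] using hdet.symm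

namespace ReachesRoot

variable {g : {v // v ≠ r} → V} (hg : ReachesRoot r g)
include hg

theorem eq_root_of_isPeriodicPt {v : V} {n : ℕ} (hn : 0 < n)
    (hv : IsPeriodicPt (parentMap r g) n v) : v = r :=
  hv.eq_of_forall_exists_iterate_eq hn (parentMap_root g) hg

theorem apply_ne (a : {v // v ≠ r}) : g a ≠ a := fun h =>
  a.2 (hg.eq_root_of_isPeriodicPt one_pos (by simp [IsPeriodicPt, IsFixedPt, h]))

theorem apply_ne_of_apply_eq {a b : {v // v ≠ r}} (hab : g a = b) : g b ≠ a := fun hba =>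
  a.2 <| hg.eq_root_of_isPeriodicPt two_pos <| by
    change parentMap r g (parentMap r g a) = a
    rw [parentMap_coe, hab, parentMap_coe, hba]

theorem edgeSet_parentGraph : (parentGraph r g).edgeSet = Set.range (parentEdge r g) := by
  rw [parentGraph, edgeSet_fromEdgeSet, sdiff_eq_left, Set.disjoint_left]
  rintro _ ⟨a, rfl⟩
  simpa [parentEdge] using (hg.apply_ne a).symm

theorem injective_parentEdge : Injective (parentEdge r g) := by
  intro a b hab
  rcases Sym2.eq_iff.1 hab with ⟨h, -⟩ | ⟨hab, hba⟩
  · exact Subtype.ext h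
  · exact absurd hba (hg.apply_ne_of_apply_eq hab.symm)

theorem connected_parentGraph : (parentGraph r g).Connected := by
  have reach_root (v : V) : (parentGraph r g).Reachable v r := by
    obtain ⟨k, hk⟩ := hg v
    simpa only [hk] using parentGraph_reachable_iterate g v k
  exact (connected_iff _).2 ⟨fun u v => (reach_root u).trans (reach_root v).symm, ⟨r⟩⟩

theorem isTree_parentGraph [Fintype V] : (parentGraph r g).IsTree := by
  refine isTree_iff_connected_and_card.2 ⟨hg.connected_parentGraph, ?_⟩
  rw [hg.edgeSet_parentGraph, Nat.card_range_of_injective hg.injective_parentEdge,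
    Nat.card_eq_fintype_card, Nat.card_eq_fintype_card, Fintype.card_subtype_compl,
    Fintype.card_subtype_eq]
  have := Fintype.card_pos_iff.2 ⟨r⟩
  omega

-- The vertices at which `g` and `g'` differ are closed under `g`, so their orbits never reach `r`.
theorem eq_of_parentGraph_le {g' : {v // v ≠ r} → V}
    (hle : parentGraph r g ≤ parentGraph r g') : g = g' := by
  have step (a : {v // v ≠ r}) (ha : g a ≠ g' a) :
      ∃ b : {v // v ≠ r}, (b : V) = g a ∧ g b ≠ g' b := by
    obtain ⟨⟨b, hb⟩, -⟩ : (parentGraph r g').Adj a (g a) :=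
      hle ⟨⟨a, rfl⟩, (hg.apply_ne a).symm⟩
    rcases Sym2.eq_iff.1 hb with ⟨hba, hgb⟩ | ⟨hba, hgb⟩
    · exact absurd (by rw [← hgb, Subtype.ext hba]) ha
    · exact ⟨b, hba, fun h => hg.apply_ne_of_apply_eq hba.symm (h.trans hgb)⟩
  by_contra hne
  obtain ⟨a, ha⟩ := Function.ne_iff.1 hne
  have orbit (k : ℕ) :
      ∃ b : {v // v ≠ r}, (b : V) = (parentMap r g)^[k] a ∧ g b ≠ g' b := by
    induction k with
    | zero => exact ⟨a, rfl, ha⟩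
    | succ k ih =>
      obtain ⟨b, hb, hbne⟩ := ih
      obtain ⟨c, hc, hcne⟩ := step b hbne
      exact ⟨c, by rw [iterate_succ_apply', ← hb, parentMap_coe, hc], hcne⟩
  obtain ⟨k, hk⟩ := hg a
  obtain ⟨b, hb, -⟩ := orbit k
  exact b.2 (hb.trans hk)

theorem prod_edgeFinset_parentGraph [Fintype V] [Fintype (parentGraph r g).edgeSet]
    {M : Type*} [CommMonoid M] (F : Sym2 V → M) :
    ∏ e ∈ (parentGraph r g).edgeFinset, F e = ∏ a, F (parentEdge r g a) := by
  have hedges : (parentGraph r g).edgeFinset = univ.image (parentEdge r g) := by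
    ext e
    simp [hg.edgeSet_parentGraph]
  rw [hedges, prod_image fun a _ b _ h => hg.injective_parentEdge h]

theorem det_parentMatrix {R : Type*} [CommRing R] [Fintype V] : (parentMatrix r R g).det = 1 := by
  let depth (a : {v // v ≠ r}) : ℕᵒᵈ := OrderDual.toDual (Nat.find (hg a))
  have depth_lt {a b : {v // v ≠ r}} (h : g a = b) : depth a < depth b := by
    have := find_iterate_apply_lt hg a.2
    rwa [parentMap_coe, h] at this
  have htri : (parentMatrix r R g).BlockTriangular depth := by
    intro a b hab
    have hne : (a : V) ≠ b := by
      intro h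
      rw [Subtype.ext h] at hab
      exact lt_irrefl _ hab
    have hne' : g a ≠ b := fun h => (depth_lt h).asymm hab
    simp [parentMatrix, hne, hne']
  rw [htri.det]
  refine prod_eq_one fun k _ => ?_
  suffices (parentMatrix r R g).toSquareBlock depth k = 1 by rw [this, Matrix.det_one]
  ext a b
  have hne : g a ≠ b := fun h => (depth_lt h).ne (a.2.trans b.2.symm)
  simp [Matrix.toSquareBlock_def, parentMatrix, Matrix.one_apply, hne, Subtype.ext_iff]

end ReachesRoot

theorem exists_reachesRoot_parentGraph_eq {T : SimpleGraph V} (hT : T.IsTree) :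
    ∃ g, ReachesRoot r g ∧ parentGraph r g = T := by
  choose g hadj hdist using fun a : {v // v ≠ r} => hT.connected.exists_adj_dist_lt a.2
  have hg : ReachesRoot r g := by
    refine exists_iterate_eq_of_map_lt (T.dist · r) fun v hv => ?_
    lift v to {v // v ≠ r} using hv
    rw [parentMap_coe]
    exact hdist v
  have hle : parentGraph r g ≤ T := by
    rintro u v ⟨⟨a, ha⟩, -⟩
    rw [← mem_edgeSet, ← ha, parentEdge, mem_edgeSet]
    exact hadj a
  exact ⟨g, hg, (isTree_iff_minimal_connected.1 hT).eq_of_le hg.connected_parentGraph hle⟩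

variable {R : Type*} [Fintype V] [CommRing R]

def weightedLaplacian (w : V → V → R) : Matrix V V R :=
  Matrix.of fun i j => if i = j then ∑ k ∈ univ.erase i, w i k else -w i j

theorem weightedLaplacian_apply_eq_sum (w : V → V → R) (i j : V) :
    weightedLaplacian w i j =
      ∑ k, w i k * ((if i = j then 1 else 0) - (if k = j then 1 else 0)) := by
  simp only [mul_sub, mul_ite, mul_one, mul_zero, sum_sub_distrib, sum_ite_eq', mem_univ, if_true]
  rw [weightedLaplacian, Matrix.of_apply]
  split_ifs with h
  · rw [← h, sum_erase_eq_sub (mem_univ i)]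
  · rw [sum_const_zero, zero_sub]

theorem det_submatrix_weightedLaplacian_eq_sum_parentMatrix (w : V → V → R) (r : V) :
    ((weightedLaplacian w).submatrix ((↑) : {v // v ≠ r} → V) (↑)).det =
      ∑ g : {v // v ≠ r} → V,
        (∏ a : {v // v ≠ r}, w a (g a)) * (parentMatrix r R g).det := by
  have hrows : (weightedLaplacian w).submatrix ((↑) : {v // v ≠ r} → V) (↑) =
      Matrix.of fun a b : {v // v ≠ r} =>
        ∑ k, w a k * ((if (a : V) = b then 1 else 0) - (if k = b then 1 else 0)) := by
    ext a b
    exact weightedLaplacian_apply_eq_sum w a b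
  rw [hrows, Matrix.det_of_sum_mul_rows]
  rfl

open scoped Classical in
theorem det_submatrix_weightedLaplacian (w : V → V → R) (hsym : ∀ i j, w i j = w j i)
    (r : V) :
    ((weightedLaplacian w).submatrix ((↑) : {v // v ≠ r} → V) (↑)).det =
      ∑ T ∈ univ.filter (fun T : SimpleGraph V => T.IsTree),
        ∏ e ∈ T.edgeFinset, Sym2.lift ⟨w, hsym⟩ e := by
  have hdet (g : {v // v ≠ r} → V) :
      (parentMatrix r R g).det = if ReachesRoot r g then 1 else 0 := by
    split_ifs with hg
    exacts [hg.det_parentMatrix, det_parentMatrix_of_not_reachesRoot hg]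
  simp only [det_submatrix_weightedLaplacian_eq_sum_parentMatrix, hdet, mul_ite, mul_one,
    mul_zero]
  rw [← sum_filter]
  refine sum_nbij (parentGraph r) (fun g hg => ?_) (fun g₁ hg₁ g₂ _ h => ?_) (fun T hT => ?_)
    (fun g hg => ?_)
  · exact mem_filter.2 ⟨mem_univ _, (mem_filter.1 hg).2.isTree_parentGraph⟩
  · exact (mem_filter.1 hg₁).2.eq_of_parentGraph_le h.le
  · obtain ⟨g, hg, rfl⟩ := exists_reachesRoot_parentGraph_eq (r := r) (mem_filter.1 hT).2
    exact ⟨g, mem_filter.2 ⟨mem_univ _, hg⟩, rfl⟩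
  · rw [(mem_filter.1 hg).2.prod_edgeFinset_parentGraph]
    rfl

end MatrixTree

open scoped Classical in
/-- Multivariate Matrix-Tree theorem: for the weighted Laplacian `L` of the complete graph
on `N = m + 1` vertices (with symmetric weights `w i j`), the determinant of the principal
minor obtained by deleting row and column `i₀` equals the sum over all spanning trees `T`
of the complete graph of `∏_{{i,j} ∈ E(T)} w i j`. -/
theorem matrix_tree_multivariate
    (m : ℕ) (R : Type*) [CommRing R]
    (w : Fin (m + 1) → Fin (m + 1) → R) (hsym : ∀ i j, w i j = w j i)
    (i0 : Fin (m + 1)) :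
    Matrix.det
      ((Matrix.of (fun i j : Fin (m + 1) =>
        if i = j then ∑ k ∈ Finset.univ.erase i, w i k else - w i j)).submatrix
          i0.succAbove i0.succAbove)
      = ∑ T ∈ Finset.univ.filter (fun T : SimpleGraph (Fin (m + 1)) => T.IsTree),
          ∏ e ∈ T.edgeFinset, Sym2.lift ⟨w, hsym⟩ e := by
  rw [← MatrixTree.det_submatrix_weightedLaplacian w hsym i0,
    ← Matrix.det_submatrix_equiv_self (finSuccAboveEquiv i0)]
  rfl
end

section
/- Let T be a spanning hypertree of the complete 3-uniform hypergraph on {1,…,N} with hyperedges A_1,…,A_n, and let τ_S denote the permutation cyclically rotating the elements of a subset S in their natural order. Then the product τ_{A_1} ∘ τ_{A_2} ∘ ⋯ ∘ τ_{A_n} is a single cycle of length N. -/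
/-!
Writing the rotation of `a < b < c` as `(a b)(b c)` turns the product into a product of `2n`
transpositions whose edges connect all `2n + 1` points, i.e. form a spanning tree. Such a product
is a full cycle whatever the order of its factors: a leaf `v` with edge `vw` splits it as
`P₁ (v w) P₂` with `P₁, P₂` fixing `v`, so it equals `(v (P₁ w)) P₁ P₂`; by induction `P₁ P₂` is a
cycle through all points but `v`, and the transposition inserts `v` into it.
-/

variable {α : Type*} [DecidableEq α]

/-- `rotPerm S` is the permutation that cyclically rotates the elements of the finite set
`S` in their natural order (each element of `S` is sent to the next larger one, the
largest to the smallest), fixing everything outside `S`. -/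
def rotPerm {β : Type*} [DecidableEq β] [LinearOrder β] (S : Finset β) : Equiv.Perm β :=
  (S.sort (· ≤ ·)).formPerm

open Equiv Finset Relation

section Lists

variable {β : Type*} [DecidableEq β]

lemma List.exists_count_eq_one_of_length_lt {l : List β} {V : Finset β}
    (hlV : ∀ a ∈ l, a ∈ V) (hVl : ∀ v ∈ V, v ∈ l) (hlen : l.length < 2 * #V) :
    ∃ v ∈ V, l.count v = 1 := by
  by_contra! h
  have htwo : ∀ v ∈ V, 2 ≤ l.count v := fun v hv => by
    have := List.count_pos_iff.2 (hVl v hv)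
    have := h v hv
    omega
  have : 2 * #V ≤ l.length := calc
    2 * #V = ∑ _v ∈ V, 2 := by rw [sum_const, smul_eq_mul, mul_comm]
    _ ≤ ∑ v ∈ V, l.count v := Finset.sum_le_sum htwo
    _ = l.length := by simpa using Multiset.sum_count_eq_card (m := (l : Multiset β)) hlV
  omega

lemma List.exists_formPerm_eq_swap_mul {l : List β} {v x : β}
    (hl : l.Nodup) (hv : v ∉ l) (hx : x ∈ l) :
    ∃ l' : List β, l'.Nodup ∧ l'.toFinset = insert v l.toFinset ∧
      Equiv.swap v x * l.formPerm = l'.formPerm := by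
  obtain ⟨s, t, rfl⟩ := List.append_of_mem hx
  have hrot : (s ++ x :: t) ~r (x :: (t ++ s)) := List.isRotated_append
  refine ⟨v :: x :: (t ++ s), ?_, ?_, ?_⟩
  · exact List.nodup_cons.2 ⟨fun h => hv (hrot.mem_iff.2 h), hrot.nodup_iff.1 hl⟩
  · ext a
    simp only [List.toFinset_cons, List.toFinset_append, mem_insert, mem_union,
      List.mem_toFinset]
    tauto
  · rw [List.formPerm_eq_of_isRotated hl hrot, List.formPerm_cons_cons]

end Lists

section TranspositionTrees

variable {β : Type*}

-- `(endpoints T).count v` is the degree of `v` in the multigraph with edge list `T`.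
def endpoints (T : List (β × β)) : List β :=
  T.flatMap fun e => [e.1, e.2]

def EdgeAdj (T : List (β × β)) (x y : β) : Prop :=
  (x, y) ∈ T ∨ (y, x) ∈ T

@[simp] lemma endpoints_cons (e : β × β) (T : List (β × β)) :
    endpoints (e :: T) = e.1 :: e.2 :: endpoints T := rfl

@[simp] lemma endpoints_append (T₁ T₂ : List (β × β)) :
    endpoints (T₁ ++ T₂) = endpoints T₁ ++ endpoints T₂ :=
  List.flatMap_append

lemma length_endpoints (T : List (β × β)) : (endpoints T).length = 2 * T.length := by
  simp [endpoints, List.length_flatMap, mul_comm]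

lemma EdgeAdj.mem_endpoints {T : List (β × β)} {x y : β} (h : EdgeAdj T x y) :
    x ∈ endpoints T := by
  rcases h with h | h <;> exact List.mem_flatMap.2 ⟨_, h, by simp⟩

lemma EdgeAdj.symm {T : List (β × β)} {x y : β} (h : EdgeAdj T x y) : EdgeAdj T y x :=
  Or.symm h

lemma EdgeAdj.mono {T T' : List (β × β)} (h : T ⊆ T') : EdgeAdj T ≤ EdgeAdj T' :=
  fun _ _ => Or.imp (@h _) (@h _)

lemma mem_endpoints_of_connected {T : List (β × β)} {V : Finset β}
    (hconn : ∀ u ∈ V, ∀ w ∈ V, ReflTransGen (EdgeAdj T) u w) (hV : 1 < #V) {v : β}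
    (hv : v ∈ V) : v ∈ endpoints T := by
  obtain ⟨u, hu, huv⟩ := exists_mem_ne hV v
  rcases (hconn v hv u hu).cases_head with rfl | ⟨c, hvc, -⟩
  · exact absurd rfl huv
  · exact hvc.mem_endpoints

lemma List.reflTransGen_edgeAdj_zip_tail {l : List β} {x y : β} (hx : x ∈ l)
    (hy : y ∈ l) : ReflTransGen (EdgeAdj (l.zip l.tail)) x y := by
  induction l generalizing x y with
  | nil => simp at hx
  | cons a t ih =>
    cases t with
    | nil =>
      simp only [List.mem_singleton] at hx hy
      subst hx hy
      exact .refl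
    | cons b t =>
      have hsub : (b :: t).zip t ⊆ (a :: b :: t).zip (b :: t) := List.subset_cons_self _ _
      have hab : EdgeAdj ((a :: b :: t).zip (b :: t)) a b := Or.inl List.mem_cons_self
      have ih' : ∀ {x y}, x ∈ b :: t → y ∈ b :: t →
          ReflTransGen (EdgeAdj ((a :: b :: t).zip (b :: t))) x y := fun hx hy =>
        ReflTransGen.mono (EdgeAdj.mono hsub) _ _ (ih hx hy)
      rcases List.mem_cons.1 hx with rfl | hx' <;> rcases List.mem_cons.1 hy with rfl | hy'
      · exact .refl
      · exact .head hab (ih' List.mem_cons_self hy')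
      · exact .tail (ih' hx' List.mem_cons_self) hab.symm
      · exact ih' hx' hy'

variable [DecidableEq β]

def prodSwaps (T : List (β × β)) : Perm β :=
  (T.map fun e => swap e.1 e.2).prod

@[simp] lemma prodSwaps_cons (e : β × β) (T : List (β × β)) :
    prodSwaps (e :: T) = swap e.1 e.2 * prodSwaps T := List.prod_cons

@[simp] lemma prodSwaps_append (T₁ T₂ : List (β × β)) :
    prodSwaps (T₁ ++ T₂) = prodSwaps T₁ * prodSwaps T₂ := by
  simp [prodSwaps]

lemma prodSwaps_apply_of_notMem_endpoints {T : List (β × β)} {v : β}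
    (hv : v ∉ endpoints T) : prodSwaps T v = v := by
  induction T with
  | nil => rfl
  | cons e T ih =>
    simp only [endpoints_cons, List.mem_cons, not_or] at hv
    rw [prodSwaps_cons, Perm.mul_apply, ih hv.2.2, swap_apply_of_ne_of_ne hv.1 hv.2.1]

lemma prodSwaps_apply_mem {T : List (β × β)} {V : Finset β} (hTV : ∀ a ∈ endpoints T, a ∈ V)
    {x : β} (hx : x ∈ V) : prodSwaps T x ∈ V := by
  induction T with
  | nil => exact hx
  | cons e T ih =>
    simp only [endpoints_cons, List.mem_cons, forall_eq_or_imp] at hTV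
    rw [prodSwaps_cons, Perm.mul_apply, swap_apply_def]
    split_ifs
    exacts [hTV.2.1, hTV.1, ih hTV.2.2]

lemma prodSwaps_append_cons_of_notMem {T₁ T₂ : List (β × β)} {v w : β} {d : β × β}
    (hv : v ∉ endpoints T₁) (hd : d = (v, w) ∨ d = (w, v)) :
    prodSwaps (T₁ ++ d :: T₂) = swap v (prodSwaps T₁ w) * prodSwaps (T₁ ++ T₂) := by
  have hswap : swap d.1 d.2 = swap v w := by
    rcases hd with rfl | rfl
    exacts [rfl, swap_comm _ _]
  rw [prodSwaps_append, prodSwaps_cons, hswap, prodSwaps_append, ← mul_assoc, ← mul_assoc,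
    Equiv.mul_swap_eq_swap_mul, prodSwaps_apply_of_notMem_endpoints hv]

lemma List.formPerm_eq_prodSwaps (l : List β) :
    l.formPerm = prodSwaps (l.zip l.tail) := by
  rw [prodSwaps, List.map_zip_eq_zipWith]
  rfl

lemma exists_eq_append_of_count_endpoints_eq_one {T : List (β × β)} {v : β}
    (h : (endpoints T).count v = 1) :
    ∃ T₁ d T₂ w, T = T₁ ++ d :: T₂ ∧ (d = (v, w) ∨ d = (w, v)) ∧ w ≠ v ∧
      v ∉ endpoints (T₁ ++ T₂) := by
  obtain ⟨d, hdT, hvd⟩ := List.mem_flatMap.1 (List.count_pos_iff.1 (h ▸ one_pos))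
  obtain ⟨T₁, T₂, rfl⟩ := List.append_of_mem hdT
  have hsplit : (endpoints (T₁ ++ T₂)).count v + [d.1, d.2].count v = 1 := by
    rw [← h]
    simp only [endpoints_append, endpoints_cons, List.count_append, List.count_cons,
      List.count_nil]
    omega
  have hv : v ∉ endpoints (T₁ ++ T₂) :=
    List.count_eq_zero.1 (by have := List.count_pos_iff.2 hvd; omega)
  obtain ⟨a, b⟩ := d
  simp only [List.mem_cons, List.not_mem_nil, or_false] at hvd
  rcases hvd with rfl | rfl
  · refine ⟨T₁, _, T₂, b, rfl, Or.inl rfl, ?_, hv⟩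
    rintro rfl
    simp at hsplit
  · refine ⟨T₁, _, T₂, a, rfl, Or.inr rfl, ?_, hv⟩
    rintro rfl
    simp at hsplit

lemma reflTransGen_edgeAdj_erase_leaf {T₁ T₂ : List (β × β)} {v w : β} {d : β × β}
    (hv : v ∉ endpoints (T₁ ++ T₂)) (hd : d = (v, w) ∨ d = (w, v)) {a b : β}
    (hab : ReflTransGen (EdgeAdj (T₁ ++ d :: T₂)) a b) :
    ReflTransGen (EdgeAdj (T₁ ++ T₂)) (if a = v then w else a) (if b = v then w else b) := by
  refine ReflTransGen.lift' (fun c => if c = v then w else c) (fun x y hxy => ?_) a b hab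
  change ReflTransGen _ (if x = v then w else x) (if y = v then w else y)
  have hxy' : EdgeAdj (T₁ ++ T₂) x y ∨ (x, y) = d ∨ (y, x) = d := by
    simp only [EdgeAdj, List.mem_append, List.mem_cons] at hxy ⊢
    tauto
  rcases hxy' with h | h | h
  · have hx : x ≠ v := fun hx => hv (hx ▸ h.mem_endpoints)
    have hy : y ≠ v := fun hy => hv (hy ▸ h.symm.mem_endpoints)
    rw [if_neg hx, if_neg hy]
    exact .single h
  all_goals
    rcases hd with rfl | rfl <;> obtain ⟨rfl, rfl⟩ := Prod.mk.inj h <;> simp [ReflTransGen.refl]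

theorem exists_nodup_formPerm_eq_prodSwaps {T : List (β × β)} {V : Finset β}
    (hTV : ∀ a ∈ endpoints T, a ∈ V) (hconn : ∀ u ∈ V, ∀ u' ∈ V, ReflTransGen (EdgeAdj T) u u')
    (hcard : T.length + 1 = #V) :
    ∃ l : List β, l.Nodup ∧ l.toFinset = V ∧ prodSwaps T = l.formPerm := by
  induction hk : T.length generalizing T V with
  | zero =>
    obtain ⟨x, rfl⟩ := card_eq_one.1 (hk ▸ hcard).symm
    rw [List.length_eq_zero_iff.1 hk]
    exact ⟨[x], List.nodup_singleton x, by simp, rfl⟩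
  | succ k ih =>
    obtain ⟨v, hvV, hv⟩ := List.exists_count_eq_one_of_length_lt hTV
      (fun _ hu => mem_endpoints_of_connected hconn (by omega) hu)
      (by rw [length_endpoints]; omega)
    obtain ⟨T₁, d, T₂, w, rfl, hd, hwv, hvT⟩ := exists_eq_append_of_count_endpoints_eq_one hv
    have hTV' : ∀ a ∈ endpoints (T₁ ++ T₂), a ∈ V.erase v := fun a ha =>
      mem_erase.2 ⟨fun h => hvT (h ▸ ha), hTV a (by
        simp only [endpoints_append, endpoints_cons, List.mem_append, List.mem_cons] at ha ⊢
        tauto)⟩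
    have hw : w ∈ V.erase v :=
      mem_erase.2 ⟨hwv, hTV w (by rcases hd with rfl | rfl <;> simp)⟩
    have hconn' : ∀ u ∈ V.erase v, ∀ u' ∈ V.erase v,
        ReflTransGen (EdgeAdj (T₁ ++ T₂)) u u' := fun u hu u' hu' => by
      simpa [ne_of_mem_erase hu, ne_of_mem_erase hu'] using reflTransGen_edgeAdj_erase_leaf hvT hd
        (hconn u (mem_of_mem_erase hu) u' (mem_of_mem_erase hu'))
    obtain ⟨l', hl', hl'V, hprod'⟩ := ih hTV' hconn'
      (by
        simp only [List.length_append, List.length_cons, card_erase_of_mem hvV] at hcard ⊢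
        omega)
      (by simp only [List.length_append, List.length_cons] at hk ⊢; omega)
    have hx : prodSwaps T₁ w ∈ l' := List.mem_toFinset.1 <| hl'V ▸
      prodSwaps_apply_mem (fun a ha => hTV' a (by simp [ha])) hw
    obtain ⟨l, hl, hlV, hprod⟩ := List.exists_formPerm_eq_swap_mul hl'
      (fun h => notMem_erase v V (hl'V ▸ List.mem_toFinset.2 h)) hx
    refine ⟨l, hl, by rw [hlV, hl'V, insert_erase hvV], ?_⟩
    rw [← hprod, ← hprod', prodSwaps_append_cons_of_notMem (fun h => hvT (by simp [h])) hd]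

end TranspositionTrees

section RotationProducts

variable {β : Type*} [LinearOrder β]

def consecutivePairs (A : Finset β) : List (β × β) :=
  (A.sort (· ≤ ·)).zip (A.sort (· ≤ ·)).tail

lemma rotPerm_eq_prodSwaps (A : Finset β) : rotPerm A = prodSwaps (consecutivePairs A) :=
  List.formPerm_eq_prodSwaps _

lemma prod_map_rotPerm (L : List (Finset β)) :
    (L.map rotPerm).prod = prodSwaps (L.flatMap consecutivePairs) := by
  induction L with
  | nil => rfl
  | cons A L ih => simp [ih, rotPerm_eq_prodSwaps]

lemma length_consecutivePairs (A : Finset β) : (consecutivePairs A).length = #A - 1 := by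
  simp [consecutivePairs]

lemma mem_of_mem_endpoints_consecutivePairs {A : Finset β} {a : β}
    (ha : a ∈ endpoints (consecutivePairs A)) : a ∈ A := by
  obtain ⟨e, he, hae⟩ := List.mem_flatMap.1 ha
  have := List.of_mem_zip he
  simp only [List.mem_cons, List.not_mem_nil, or_false] at hae
  rcases hae with rfl | rfl
  · exact (mem_sort _).1 this.1
  · exact (mem_sort _).1 (List.mem_of_mem_tail this.2)

lemma reflTransGen_edgeAdj_consecutivePairs {A : Finset β} {x y : β} (hx : x ∈ A)
    (hy : y ∈ A) : ReflTransGen (EdgeAdj (consecutivePairs A)) x y :=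
  List.reflTransGen_edgeAdj_zip_tail ((mem_sort _).2 hx) ((mem_sort _).2 hy)

theorem isCycle_prod_map_rotPerm [Fintype β] {V : Finset β} {L : List (Finset β)}
    (hLV : ∀ A ∈ L, A ⊆ V) (hconn : HypConnected V L.toFinset)
    (hcard : (L.map fun A => #A - 1).sum + 1 = #V) (hV : 2 ≤ #V) :
    (L.map rotPerm).prod.IsCycle ∧ (L.map rotPerm).prod.support = V := by
  set T := L.flatMap consecutivePairs
  have hTV : ∀ a ∈ endpoints T, a ∈ V := fun a ha => by
    obtain ⟨A, hA, ha⟩ := List.mem_flatMap.1 (show a ∈ L.flatMap (endpoints ∘ consecutivePairs) by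
      simpa [T, endpoints, List.flatMap_assoc] using ha)
    exact hLV A hA (mem_of_mem_endpoints_consecutivePairs ha)
  have hconnT : ∀ u ∈ V, ∀ u' ∈ V, ReflTransGen (EdgeAdj T) u u' := by
    refine fun u hu u' hu' => reflTransGen_closed (fun x y hxy => ?_) _ _ (hconn u hu u' hu')
    obtain ⟨-, A, hA, hx, hy⟩ := hxy
    have hA' : A ∈ L := List.mem_toFinset.1 hA
    exact ReflTransGen.mono (EdgeAdj.mono fun e he => List.mem_flatMap.2 ⟨A, hA', he⟩) _ _
      (reflTransGen_edgeAdj_consecutivePairs hx hy)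
  have hlen : T.length + 1 = #V := by
    simpa [T, List.length_flatMap, length_consecutivePairs] using hcard
  obtain ⟨l, hl, hlV, hprod⟩ := exists_nodup_formPerm_eq_prodSwaps hTV hconnT hlen
  have hl2 : 2 ≤ l.length := by rwa [← List.toFinset_card_of_nodup hl, hlV]
  rw [prod_map_rotPerm, hprod, ← hlV]
  exact ⟨List.isCycle_formPerm hl hl2,
    List.support_formPerm_of_nodup l hl fun x hx => by simp [hx] at hl2⟩

end RotationProducts

/-- If the hyperedges `A₁, …, Aₙ` (listed in any order by `L`) form a spanning hypertree
of the complete 3-uniform hypergraph on `Fin (2n+1)`, then the product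
`τ_{A₁} ∘ ⋯ ∘ τ_{Aₙ}` of the cyclic rotations is a single cycle of length `N = 2n+1`. -/
theorem prod_rotPerm_isCycle
    (n : ℕ) (hn : 1 ≤ n) (E' : Finset (Finset (Fin (2 * n + 1))))
    (huniform : ∀ A ∈ E', A.card = 3)
    (htree : IsHypertree Finset.univ E') (hcard : E'.card = n)
    (L : List (Finset (Fin (2 * n + 1)))) (hnodup : L.Nodup) (hL : L.toFinset = E') :
    (L.map rotPerm).prod.IsCycle ∧ (L.map rotPerm).prod.support = Finset.univ := by
  subst hL
  have hlen : L.length = n := by rw [← List.toFinset_card_of_nodup hnodup, hcard]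
  have hsum : (L.map fun A => #A - 1).sum = 2 * n := by
    rw [List.map_congr_left (g := fun _ => 2) fun A hA => by
      rw [huniform A (List.mem_toFinset.2 hA)], List.map_const', List.sum_replicate, hlen,
      smul_eq_mul, mul_comm]
  exact isCycle_prod_map_rotPerm (fun _ _ => subset_univ _) htree.2.1
    (by rw [hsum, card_univ, Fintype.card_fin]) (by rw [card_univ, Fintype.card_fin]; omega)
end
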